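/- The function f(x) = e^{−x²/2} / ∫_x^∞ e^{−t²/2} dt is (monotone) increasing on ℝ. -/

import Mathlib

open Real MeasureTheory Set Filter

noncomputable def gg (x : ℝ) : ℝ := Real.exp (-x ^ 2 / 2)
noncomputable def GG (x : ℝ) : ℝ := ∫ t in Set.Ici x, gg t

lemma gg_eq (x : ℝ) : gg x = Real.exp (-(1/2) * x ^ 2) := by
  unfold gg; ring_nf

lemma gg_cont : Continuous gg := by
  unfold gg; fun_prop

lemma gg_int : Integrable gg := by
  have h := integrable_exp_neg_mul_sq (by norm_num : (0:ℝ) < 1/2)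
  refine h.congr ?_
  filter_upwards with x
  rw [gg_eq]

lemma gg_pos (x : ℝ) : 0 < gg x := Real.exp_pos _

lemma GG_eq_Ioi (x : ℝ) : GG x = ∫ t in Set.Ioi x, gg t := by
  unfold GG; rw [integral_Ici_eq_integral_Ioi]

lemma GG_pos (x : ℝ) : 0 < GG x := by
  rw [GG_eq_Ioi]
  rw [setIntegral_pos_iff_support_of_nonneg_ae]
  · have : Function.support gg = Set.univ := by
      ext y; simp [Function.support, (gg_pos y).ne']
    rw [this, Set.univ_inter]
    simp
  · filter_upwards with y using (gg_pos y).le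
  · exact gg_int.integrableOn

lemma GG_deriv (x : ℝ) : HasDerivAt GG (-(gg x)) x := by
  have hrep : ∀ y : ℝ, GG y = (∫ t, gg t) - ((∫ t in Set.Iic (0:ℝ), gg t) + ∫ t in (0:ℝ)..y, gg t) := by
    intro y
    have h1 : (∫ t in (0:ℝ)..y, gg t) = (∫ t in Set.Iic y, gg t) - ∫ t in Set.Iic (0:ℝ), gg t :=
      (intervalIntegral.integral_Iic_sub_Iic gg_int.integrableOn gg_int.integrableOn).symm
    have h2 : (∫ t, gg t) = (∫ t in Set.Iic y, gg t) + ∫ t in Set.Ioi y, gg t := by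
      rw [← setIntegral_union (Set.Iic_disjoint_Ioi le_rfl) measurableSet_Ioi
        gg_int.integrableOn gg_int.integrableOn, Set.Iic_union_Ioi,
        MeasureTheory.setIntegral_univ]
    rw [GG_eq_Ioi, h1]
    linarith
  have hd : HasDerivAt (fun y => (∫ t, gg t) - ((∫ t in Set.Iic (0:ℝ), gg t) + ∫ t in (0:ℝ)..y, gg t)) (-(gg x)) x := by
    have hI : HasDerivAt (fun y => ∫ t in (0:ℝ)..y, gg t) (gg x) x :=
      intervalIntegral.integral_hasDerivAt_right (gg_int.intervalIntegrable)
        (gg_cont.stronglyMeasurableAtFilter _ _) gg_cont.continuousAt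
    simpa using ((hI.const_add (∫ t in Set.Iic (0:ℝ), gg t)).const_sub (∫ t, gg t))
  exact hd.congr_of_eventuallyEq (Filter.Eventually.of_forall hrep)

lemma key_ineq (x : ℝ) : x * GG x ≤ gg x := by
  rcases le_or_gt x 0 with hx | hx
  · have := GG_pos x
    nlinarith [gg_pos x]
  · have hint : ∀ y : ℝ, (∫ t in Set.Ioi y, t * gg t) = gg y := by
      intro y
      have hFd : ∀ t ∈ Set.Ici y, HasDerivAt (fun s => -(gg s)) (t * gg t) t := by
        intro t _
        have : HasDerivAt (fun s : ℝ => -s ^ 2 / 2) (-t) t := by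
          have := ((hasDerivAt_pow 2 t).neg.div_const 2)
          simpa using this.congr_deriv (by ring)
        have h2 : HasDerivAt gg (-t * gg t) t := by
          exact this.exp.congr_deriv (by unfold gg; ring)
        exact h2.neg.congr_deriv (by ring)
      have hIi : IntegrableOn (fun t => t * gg t) (Set.Ioi y) := by
        have h := integrable_mul_exp_neg_mul_sq (by norm_num : (0:ℝ) < 1/2)
        refine (h.congr ?_).integrableOn
        filter_upwards with t
        rw [gg_eq]
      have htend : Tendsto (fun s => -(gg s)) atTop (nhds 0) := by
        rw [show (0:ℝ) = -0 by ring]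
        refine Tendsto.neg ?_
        have : Tendsto (fun s : ℝ => -s^2/2) atTop atBot := by
          apply Filter.Tendsto.atBot_div_const (by norm_num : (0:ℝ) < 2)
          exact tendsto_neg_atBot_iff.2 (tendsto_pow_atTop two_ne_zero)
        exact Real.tendsto_exp_atBot.comp this
      have := integral_Ioi_of_hasDerivAt_of_tendsto' hFd hIi htend
      simpa using this
    have hmono : (∫ t in Set.Ioi x, x * gg t) ≤ ∫ t in Set.Ioi x, t * gg t := by
      apply setIntegral_mono_on
      · exact (gg_int.integrableOn.const_mul x)
      · have h := integrable_mul_exp_neg_mul_sq (by norm_num : (0:ℝ) < 1/2)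
        refine (h.congr ?_).integrableOn
        filter_upwards with t
        rw [gg_eq]
      · exact measurableSet_Ioi
      · intro t ht
        exact mul_le_mul_of_nonneg_right (le_of_lt ht) (gg_pos t).le
    calc x * GG x = ∫ t in Set.Ioi x, x * gg t := by
            rw [GG_eq_Ioi, integral_const_mul]
      _ ≤ ∫ t in Set.Ioi x, t * gg t := hmono
      _ = gg x := hint x

theorem inverse_mills_ratio_monotone :
    Monotone (fun x : ℝ =>
      Real.exp (-x ^ 2 / 2) / ∫ t in Set.Ici x, Real.exp (-t ^ 2 / 2)) := by
  have heq : (fun x : ℝ => Real.exp (-x ^ 2 / 2) / ∫ t in Set.Ici x, Real.exp (-t ^ 2 / 2))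
      = fun x => gg x / GG x := rfl
  rw [heq]
  have hgd : ∀ x : ℝ, HasDerivAt gg (-x * gg x) x := by
    intro x
    have : HasDerivAt (fun s : ℝ => -s ^ 2 / 2) (-x) x := by
      have := ((hasDerivAt_pow 2 x).neg.div_const 2)
      simpa using this.congr_deriv (by ring)
    exact this.exp.congr_deriv (by unfold gg; ring)
  have hfd : ∀ x : ℝ, HasDerivAt (fun x => gg x / GG x)
      (((-x * gg x) * GG x - gg x * (-(gg x))) / (GG x)^2) x := by
    intro x
    exact (hgd x).div (GG_deriv x) (GG_pos x).ne'
  apply monotone_of_deriv_nonneg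
  · intro x; exact (hfd x).differentiableAt
  · intro x
    rw [(hfd x).deriv]
    apply div_nonneg _ (sq_nonneg _)
    have := key_ineq x
    nlinarith [gg_pos x, GG_pos x]
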